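/- arXiv:2301.06552 — 6 statements merged into one kernel-verified Lean document; each statement's English description precedes it below -/
import Mathlib

section
/- Let h ∈ ℝ³ be a constant vector and let y : [0,∞) → ℝ³ be a differentiable solution of ẏ(t) = f(y(t)) + h. Then the Casimir function C(u) := ‖u‖² satisfies, for every t ≥ 0, C(y(t)) ≤ C(y(0)) e^{−mt} + (‖h‖²/m²)(1 + e^{−mt}). -/
/-- The translated Lorenz vector field
f(y₁,y₂,y₃) = (−ζy₁ + ζy₂, −y₁y₃ − ζy₁ − y₂, y₁y₂ − βy₃). -/
noncomputable def translatedLorenzField (ζ β : ℝ) (y : EuclideanSpace ℝ (Fin 3)) :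
    EuclideanSpace ℝ (Fin 3) :=
  (WithLp.equiv 2 (Fin 3 → ℝ)).symm
    ![-ζ * y 0 + ζ * y 1, -(y 0) * (y 2) - ζ * (y 0) - y 1, (y 0) * (y 1) - β * (y 2)]

lemma keybound (ζ β m : ℝ) (hζ : 0 < ζ) (hβ : 0 < β) (hm : m = min 1 (min ζ β))
    (u h : EuclideanSpace ℝ (Fin 3)) :
    (inner ℝ u (translatedLorenzField ζ β u + h) : ℝ) + inner ℝ (translatedLorenzField ζ β u + h) u
      ≤ -m * ‖u‖ ^ 2 + ‖h‖ ^ 2 / m := by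
  have hm0 : 0 < m := by
    rw [hm]; exact lt_min one_pos (lt_min hζ hβ)
  have hm1 : m ≤ 1 := hm ▸ min_le_left _ _
  have hmζ : m ≤ ζ := hm ▸ (min_le_right _ _).trans (min_le_left _ _)
  have hmβ : m ≤ β := hm ▸ (min_le_right _ _).trans (min_le_right _ _)
  have hinner : (inner ℝ u (translatedLorenzField ζ β u) : ℝ)
      = -(ζ * u 0 ^ 2 + u 1 ^ 2 + β * u 2 ^ 2) := by
    simp [translatedLorenzField, PiLp.inner_apply, Fin.sum_univ_three, RCLike.inner_apply,
      WithLp.equiv_symm_apply]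
    ring
  have hnorm : ‖u‖ ^ 2 = u 0 ^ 2 + u 1 ^ 2 + u 2 ^ 2 := by
    rw [← real_inner_self_eq_norm_sq]
    simp only [PiLp.inner_apply, Fin.sum_univ_three, RCLike.inner_apply]
    simp
    ring
  have hcs : (inner ℝ u h : ℝ) ≤ ‖u‖ * ‖h‖ := real_inner_le_norm u h
  have hamgm : 2 * (‖u‖ * ‖h‖) ≤ m * ‖u‖ ^ 2 + ‖h‖ ^ 2 / m := by
    rw [← sub_nonneg]
    have he : m * ‖u‖ ^ 2 + ‖h‖ ^ 2 / m - 2 * (‖u‖ * ‖h‖) = (m * ‖u‖ - ‖h‖) ^ 2 / m := by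
      field_simp; ring
    rw [he]; positivity
  have e1 : (inner ℝ u (translatedLorenzField ζ β u + h) : ℝ)
      = inner ℝ u (translatedLorenzField ζ β u) + inner ℝ u h := inner_add_right _ _ _
  have e2 : (inner ℝ (translatedLorenzField ζ β u + h) u : ℝ)
      = inner ℝ u (translatedLorenzField ζ β u + h) := real_inner_comm _ _
  rw [e2, e1, hinner, hnorm]
  have hfu : -(ζ * u 0 ^ 2 + u 1 ^ 2 + β * u 2 ^ 2)
      ≤ -m * (u 0 ^ 2 + u 1 ^ 2 + u 2 ^ 2) := by
    nlinarith [sq_nonneg (u 0), sq_nonneg (u 1), sq_nonneg (u 2)]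
  nlinarith [hcs, hamgm, hfu]

/-- If y : [0,∞) → ℝ³ is a differentiable solution of
ẏ(t) = f(y(t)) + h with h a constant vector, then the Casimir C(u) = ‖u‖²
satisfies C(y(t)) ≤ C(y(0)) e^{−mt} + (‖h‖²/m²)(1 + e^{−mt}) for all t ≥ 0,
where m = min(1, ζ, β). -/
theorem casimir_lyapunov_bound (ζ γ β : ℝ) (hζ : 0 < ζ) (hγ : 0 < γ) (hβ : 0 < β)
    (h : EuclideanSpace ℝ (Fin 3)) (y : ℝ → EuclideanSpace ℝ (Fin 3))
    (hy : ∀ t ∈ Set.Ici (0 : ℝ),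
      HasDerivWithinAt y (translatedLorenzField ζ β (y t) + h) (Set.Ici 0) t) :
    ∀ t ∈ Set.Ici (0 : ℝ),
      ‖y t‖ ^ 2 ≤ ‖y 0‖ ^ 2 * Real.exp (-(min 1 (min ζ β)) * t) +
        (‖h‖ ^ 2 / (min 1 (min ζ β)) ^ 2) * (1 + Real.exp (-(min 1 (min ζ β)) * t)) := by
  intro t ht
  set m : ℝ := min 1 (min ζ β) with hm
  have hm0 : 0 < m := lt_min one_pos (lt_min hζ hβ)
  set v : ℝ → EuclideanSpace ℝ (Fin 3) := fun s => translatedLorenzField ζ β (y s) + h with hv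
  set G : ℝ → ℝ := fun s => (inner ℝ (y s) (y s) : ℝ) with hG
  set G' : ℝ → ℝ := fun s => (inner ℝ (y s) (v s) : ℝ) + inner ℝ (v s) (y s) with hG'
  have hGnorm : ∀ s, G s = ‖y s‖ ^ 2 := fun s => real_inner_self_eq_norm_sq _
  have hGderiv : ∀ s ∈ Set.Ici (0 : ℝ), HasDerivWithinAt G (G' s) (Set.Ici 0) s := by
    intro s hs
    exact (hy s hs).inner ℝ (hy s hs)
  have hcont : ContinuousOn G (Set.Icc 0 t) := fun s hs =>
    ((hGderiv s hs.1).continuousWithinAt).mono Set.Icc_subset_Ici_self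
  have hbound : ∀ s ∈ Set.Ico (0 : ℝ) t, G' s ≤ (-m) * G s + ‖h‖ ^ 2 / m := by
    intro s hs
    have := keybound ζ β m hζ hβ hm (y s) h
    rw [hGnorm s]
    exact this
  have hslope : ∀ s ∈ Set.Ico (0 : ℝ) t, ∀ r, G' s < r →
      ∃ᶠ z in nhdsWithin s (Set.Ioi s), (z - s)⁻¹ * (G z - G s) < r := by
    intro s hs r hr
    exact ((hGderiv s hs.1).mono (Set.Ici_subset_Ici.mpr hs.1)).liminf_right_slope_le hr
  have key := le_gronwallBound_of_liminf_deriv_right_le hcont hslope (le_of_eq (hGnorm 0))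
    hbound t ⟨ht, le_refl t⟩
  rw [hGnorm t] at key
  rw [gronwallBound_of_K_ne_0 (neg_ne_zero.mpr (ne_of_gt hm0))] at key
  simp only [sub_zero] at key
  have hexp : 0 < Real.exp (-m * t) := Real.exp_pos _
  have hh2 : 0 ≤ ‖h‖ ^ 2 := sq_nonneg _
  calc ‖y t‖ ^ 2 ≤ ‖y 0‖ ^ 2 * Real.exp (-m * t) +
        ‖h‖ ^ 2 / m / (-m) * (Real.exp (-m * t) - 1) := key
    _ ≤ ‖y 0‖ ^ 2 * Real.exp (-m * t) + (‖h‖ ^ 2 / m ^ 2) * (1 + Real.exp (-m * t)) := by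
        have he : ‖h‖ ^ 2 / m / (-m) * (Real.exp (-m * t) - 1)
            = (‖h‖ ^ 2 / m ^ 2) * (1 - Real.exp (-m * t)) := by
          field_simp; ring
        rw [he]
        have : (‖h‖ ^ 2 / m ^ 2) * (1 - Real.exp (-m * t))
            ≤ (‖h‖ ^ 2 / m ^ 2) * (1 + Real.exp (-m * t)) := by
          apply mul_le_mul_of_nonneg_left (by linarith) (by positivity)
        linarith
end

section
/- Let h ∈ ℝ³ be a constant vector, let y : [0,∞) → ℝ³ be a differentiable solution of ẏ(t) = f(y(t)) + h, and let t₀ > 0. Then for every t ≥ t₀, ‖y(t)‖² ≤ a‖y(0)‖² + K(1 + a), where a := e^{−m t₀} ∈ (0,1) and K := ‖h‖²/m². In particular, if τ is any return time bounded below by t₀, the Casimir C(u) = ‖u‖² satisfies the drift inequality C(y(τ)) ≤ aC(y(0)) + K(1+a). -/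
open Real Set in
theorem casimir_drift_aux (ζ γ β : ℝ) (hζ : 0 < ζ) (hγ : 0 < γ) (hβ : 0 < β)
    (h : EuclideanSpace ℝ (Fin 3)) (y : ℝ → EuclideanSpace ℝ (Fin 3))
    (hy : ∀ t ∈ Set.Ici (0 : ℝ),
      HasDerivWithinAt y (translatedLorenzField ζ β (y t) + h) (Set.Ici 0) t)
    (t : ℝ) (ht : 0 ≤ t) :
    ‖y t‖ ^ 2 ≤ ‖y 0‖ ^ 2 * Real.exp (-(min 1 (min ζ β)) * t) +
      (‖h‖ ^ 2 / (min 1 (min ζ β)) ^ 2) * (1 - Real.exp (-(min 1 (min ζ β)) * t)) := by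
  set m : ℝ := min 1 (min ζ β) with hmdef
  have hm : 0 < m := lt_min one_pos (lt_min hζ hβ)
  have hdV : ∀ s ∈ Ici (0:ℝ), HasDerivWithinAt (fun s => ‖y s‖ ^ 2)
      (2 * (inner ℝ (y s) (translatedLorenzField ζ β (y s) + h) : ℝ)) (Ici 0) s := fun s hs =>
    (hy s hs).norm_sq
  have hcont : ContinuousOn (fun s => ‖y s‖ ^ 2) (Icc 0 t) := fun s hs =>
    ((hdV s hs.1).continuousWithinAt).mono (fun z hz => hz.1)
  have hbound : ∀ s ∈ Ico (0:ℝ) t,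
      2 * (inner ℝ (y s) (translatedLorenzField ζ β (y s) + h) : ℝ)
        ≤ (-m) * ‖y s‖^2 + ‖h‖^2 / m := by
    intro s hs
    have h1 : (inner ℝ (y s) (translatedLorenzField ζ β (y s)) : ℝ)
        = -(ζ*(y s 0)^2 + (y s 1)^2 + β*(y s 2)^2) := by
      simp [translatedLorenzField, PiLp.inner_apply, Fin.sum_univ_three, RCLike.inner_apply,
        WithLp.equiv_symm_apply, PiLp.toLp_apply]
      ring
    have h2 : ‖y s‖^2 = (y s 0)^2 + (y s 1)^2 + (y s 2)^2 := by
      rw [show ‖y s‖^2 = (inner ℝ (y s) (y s) : ℝ) from (real_inner_self_eq_norm_sq _).symm]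
      simp only [PiLp.inner_apply, Fin.sum_univ_three, RCLike.inner_apply, conj_trivial]
      ring
    have h3 : (inner ℝ (y s) h : ℝ) ≤ ‖y s‖ * ‖h‖ := real_inner_le_norm _ _
    have h4 : 2 * (‖y s‖ * ‖h‖) - m * ‖y s‖^2 ≤ ‖h‖^2 / m := by
      rw [le_div_iff₀ hm]
      nlinarith [sq_nonneg (m * ‖y s‖ - ‖h‖)]
    have h5 : (inner ℝ (y s) (translatedLorenzField ζ β (y s)) : ℝ) ≤ -m * ‖y s‖^2 := by
      rw [h1, h2]
      have e1 : m ≤ 1 := min_le_left _ _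
      have e2 : m ≤ ζ := le_trans (min_le_right _ _) (min_le_left _ _)
      have e3 : m ≤ β := le_trans (min_le_right _ _) (min_le_right _ _)
      nlinarith [sq_nonneg (y s 0), sq_nonneg (y s 1), sq_nonneg (y s 2)]
    rw [inner_add_right]
    nlinarith [h3, h4, h5]
  have hgr := le_gronwallBound_of_liminf_deriv_right_le hcont
    (fun x hx r hr => (((hdV x hx.1).mono (Ici_subset_Ici.2 hx.1)).liminf_right_slope_le hr))
    (le_refl (‖y 0‖^2)) hbound t ⟨ht, le_refl t⟩
  rw [gronwallBound_of_K_ne_0 (neg_ne_zero.2 hm.ne')] at hgr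
  simp only [sub_zero] at hgr
  have heq : (‖h‖^2/m)/(-m) * (Real.exp (-m*t) - 1) = ‖h‖^2/m^2 * (1 - Real.exp (-m*t)) := by
    field_simp
    ring
  linarith [hgr, heq.symm.le]

/-- If y solves ẏ = f(y) + h on [0,∞) and t₀ > 0, then for every
t ≥ t₀ one has ‖y(t)‖² ≤ a‖y(0)‖² + K(1+a) with a = e^{−mt₀} ∈ (0,1), K = ‖h‖²/m²,
m = min(1, ζ, β); in particular the Casimir C(u) = ‖u‖² satisfies the drift
inequality C(y(τ)) ≤ aC(y(0)) + K(1+a) for any return time τ ≥ t₀. -/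
theorem casimir_drift_inequality (ζ γ β : ℝ) (hζ : 0 < ζ) (hγ : 0 < γ) (hβ : 0 < β)
    (h : EuclideanSpace ℝ (Fin 3)) (y : ℝ → EuclideanSpace ℝ (Fin 3))
    (hy : ∀ t ∈ Set.Ici (0 : ℝ),
      HasDerivWithinAt y (translatedLorenzField ζ β (y t) + h) (Set.Ici 0) t)
    (t₀ : ℝ) (ht₀ : 0 < t₀) :
    (Real.exp (-(min 1 (min ζ β)) * t₀) ∈ Set.Ioo (0 : ℝ) 1) ∧
    (∀ t, t₀ ≤ t →
      ‖y t‖ ^ 2 ≤ Real.exp (-(min 1 (min ζ β)) * t₀) * ‖y 0‖ ^ 2 +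
        (‖h‖ ^ 2 / (min 1 (min ζ β)) ^ 2) * (1 + Real.exp (-(min 1 (min ζ β)) * t₀))) ∧
    (∀ τ : ℝ, t₀ ≤ τ →
      ‖y τ‖ ^ 2 ≤ Real.exp (-(min 1 (min ζ β)) * t₀) * ‖y 0‖ ^ 2 +
        (‖h‖ ^ 2 / (min 1 (min ζ β)) ^ 2) * (1 + Real.exp (-(min 1 (min ζ β)) * t₀))) := by
  set m : ℝ := min 1 (min ζ β) with hmdef
  have hm : 0 < m := lt_min one_pos (lt_min hζ hβ)
  have hmem : Real.exp (-m * t₀) ∈ Set.Ioo (0 : ℝ) 1 :=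
    ⟨Real.exp_pos _, Real.exp_lt_one_iff.2 (by nlinarith)⟩
  have main : ∀ t, t₀ ≤ t →
      ‖y t‖ ^ 2 ≤ Real.exp (-m * t₀) * ‖y 0‖ ^ 2 +
        (‖h‖ ^ 2 / m ^ 2) * (1 + Real.exp (-m * t₀)) := by
    intro t ht
    have ht0 : (0:ℝ) ≤ t := le_trans ht₀.le ht
    have key := casimir_drift_aux ζ γ β hζ hγ hβ h y hy t ht0
    have he : Real.exp (-m * t) ≤ Real.exp (-m * t₀) :=
      Real.exp_le_exp.2 (by nlinarith)
    have hK : (0:ℝ) ≤ ‖h‖ ^ 2 / m ^ 2 := by positivity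
    have hy0 : (0:ℝ) ≤ ‖y 0‖ ^ 2 := sq_nonneg _
    have hep : (0:ℝ) < Real.exp (-m * t) := Real.exp_pos _
    nlinarith [key, he, hK, hy0, hep, Real.exp_pos (-m * t₀)]
  exact ⟨hmem, main, main⟩
end

section
/- Let h ∈ ℝ³ be a constant vector and let y : [0,∞) → ℝ³ be a differentiable solution of ẏ(t) = f(y(t)) + h. Then limsup_{t→∞} ‖y(t)‖² ≤ ‖h‖²/m²; in particular every ball centered at the origin of radius larger than ‖h‖/m is absorbing for the perturbed translated Lorenz dynamics. -/
open scoped RealInnerProductSpace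

lemma inner_translatedLorenzField (ζ β : ℝ) (z : EuclideanSpace ℝ (Fin 3)) :
    ⟪z, translatedLorenzField ζ β z⟫ = -(ζ * (z 0)^2) - (z 1)^2 - β * (z 2)^2 := by
  simp [translatedLorenzField, PiLp.inner_apply, Fin.sum_univ_three,
    RCLike.inner_apply, conj_trivial]
  ring

lemma norm_sq_coords (z : EuclideanSpace ℝ (Fin 3)) :
    ‖z‖ ^ 2 = (z 0)^2 + (z 1)^2 + (z 2)^2 := by
  rw [← real_inner_self_eq_norm_sq]
  simp only [PiLp.inner_apply, Fin.sum_univ_three, RCLike.inner_apply, conj_trivial, sq]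

/-- If y solves ẏ = f(y) + h on [0,∞), then
limsup_{t→∞} ‖y(t)‖² ≤ ‖h‖²/m² with m = min(1, ζ, β); in particular every ball
centered at the origin of radius larger than ‖h‖/m is absorbing. -/
theorem limsup_casimir_le_and_absorbing (ζ γ β : ℝ) (hζ : 0 < ζ) (hγ : 0 < γ) (hβ : 0 < β)
    (h : EuclideanSpace ℝ (Fin 3)) (y : ℝ → EuclideanSpace ℝ (Fin 3))
    (hy : ∀ t ∈ Set.Ici (0 : ℝ),
      HasDerivWithinAt y (translatedLorenzField ζ β (y t) + h) (Set.Ici 0) t) :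
    Filter.limsup (fun t => ‖y t‖ ^ 2) Filter.atTop ≤ ‖h‖ ^ 2 / (min 1 (min ζ β)) ^ 2 ∧
    ∀ r : ℝ, ‖h‖ / min 1 (min ζ β) < r → ∃ T : ℝ, ∀ t, T ≤ t →
      y t ∈ Metric.closedBall (0 : EuclideanSpace ℝ (Fin 3)) r := by
  set m : ℝ := min 1 (min ζ β) with hm_def
  have hm : 0 < m := lt_min one_pos (lt_min hζ hβ)
  set g : ℝ → ℝ := fun t => ‖y t‖ ^ 2 with hg_def
  set C : ℝ := ‖h‖ ^ 2 / m with hC_def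
  set L : ℝ := ‖h‖ ^ 2 / m ^ 2 with hL_def
  -- derivative of g
  set g' : ℝ → ℝ := fun t => 2 * ⟪y t, translatedLorenzField ζ β (y t) + h⟫ with hg'_def
  have hder : ∀ t ∈ Set.Ici (0 : ℝ), HasDerivWithinAt g (g' t) (Set.Ici 0) t := fun t ht =>
    (hy t ht).norm_sq
  -- pointwise differential inequality
  have hbound : ∀ t ∈ Set.Ici (0 : ℝ), g' t ≤ -m * g t + C := by
    intro t _
    have h1 : ⟪y t, translatedLorenzField ζ β (y t)⟫ ≤ -m * g t := by
      have hgt : g t = ‖y t‖ ^ 2 := rfl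
      rw [inner_translatedLorenzField, hgt, norm_sq_coords]
      have h0 : m ≤ ζ := le_trans (min_le_right _ _) (min_le_left _ _)
      have h2 : m ≤ 1 := min_le_left _ _
      have h3 : m ≤ β := le_trans (min_le_right _ _) (min_le_right _ _)
      nlinarith [sq_nonneg (y t 0), sq_nonneg (y t 1), sq_nonneg (y t 2)]
    have h2 : ⟪y t, h⟫ ≤ ‖y t‖ * ‖h‖ := real_inner_le_norm _ _
    have h3 : 2 * (‖y t‖ * ‖h‖) ≤ m * ‖y t‖ ^ 2 + ‖h‖ ^ 2 / m := by
      have hid : m * (‖h‖ ^ 2 / m) = ‖h‖ ^ 2 := mul_div_cancel₀ _ hm.ne'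
      nlinarith [sq_nonneg (m * ‖y t‖ - ‖h‖), hid, hm, mul_pos hm hm]
    have := inner_add_right (𝕜 := ℝ) (y t) (translatedLorenzField ζ β (y t)) h
    rw [hg'_def]
    simp only [this]
    have hgt : g t = ‖y t‖ ^ 2 := rfl
    rw [hC_def]
    nlinarith
  -- Gronwall on every [0, b]
  have key : ∀ t : ℝ, 0 ≤ t → g t ≤ gronwallBound (g 0) (-m) C t := by
    intro b hb
    have := le_gronwallBound_of_liminf_deriv_right_le (f := g) (f' := g') (a := 0) (b := b)
      (δ := g 0) (K := -m) (ε := C)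
      (fun t ht => ((hy t ht.1).continuousWithinAt.mono Set.Icc_subset_Ici_self).norm.pow 2)
      (fun t ht r hr => ((hder t ht.1).mono (Set.Ici_subset_Ici.2 ht.1)).liminf_right_slope_le hr)
      le_rfl (fun t ht => hbound t ht.1) b ⟨hb, le_rfl⟩
    simpa using this
  -- explicit form of the bound
  have hKne : (-m : ℝ) ≠ 0 := by linarith
  set B : ℝ → ℝ := fun t => g 0 * Real.exp (-m * t) + C / (-m) * (Real.exp (-m * t) - 1)
    with hB_def
  have hBform : ∀ t, gronwallBound (g 0) (-m) C t = B t := by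
    intro t; rw [gronwallBound_of_K_ne_0 hKne]
  have hBtend : Filter.Tendsto B Filter.atTop (nhds L) := by
    have hexp : Filter.Tendsto (fun t : ℝ => Real.exp (-m * t)) Filter.atTop (nhds 0) := by
      apply Real.tendsto_exp_atBot.comp
      exact Filter.Tendsto.const_mul_atTop_of_neg (by linarith) Filter.tendsto_id
    have := ((hexp.const_mul (g 0)).add (((hexp.sub_const 1).const_mul (C / (-m)))))
    have h0 : g 0 * 0 + C / (-m) * (0 - 1) = L := by
      rw [hC_def, hL_def, mul_zero, zero_add, zero_sub, mul_neg_one, div_neg, neg_neg,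
        div_div, ← pow_two]
    rw [h0] at this
    exact this
  have hev : ∀ᶠ t in Filter.atTop, g t ≤ B t := by
    filter_upwards [Filter.eventually_ge_atTop 0] with t ht
    rw [← hBform]; exact key t ht
  constructor
  · -- limsup part
    have hcob : Filter.IsCoboundedUnder (· ≤ ·) Filter.atTop g :=
      (Filter.isBoundedUnder_of ⟨0, fun t => sq_nonneg (‖y t‖)⟩ :
        Filter.IsBoundedUnder (· ≥ ·) Filter.atTop g).isCoboundedUnder_le
    have hbd : Filter.IsBoundedUnder (· ≤ ·) Filter.atTop B := hBtend.isBoundedUnder_le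
    calc Filter.limsup g Filter.atTop ≤ Filter.limsup B Filter.atTop :=
          Filter.limsup_le_limsup hev hcob hbd
      _ = L := hBtend.limsup_eq
  · -- absorbing part
    intro r hr
    have hrL : L < r ^ 2 := by
      have h0 : 0 ≤ ‖h‖ / m := div_nonneg (norm_nonneg _) hm.le
      have : (‖h‖ / m) ^ 2 < r ^ 2 := by nlinarith
      rwa [div_pow] at this
    have hev2 : ∀ᶠ t in Filter.atTop, B t < r ^ 2 := hBtend.eventually_lt_const hrL
    obtain ⟨T', hT'⟩ := (hev2.and (Filter.eventually_ge_atTop 0)).exists_forall_of_atTop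
    refine ⟨T', fun t ht => ?_⟩
    obtain ⟨hBt, ht0⟩ := hT' t ht
    have hgt : g t ≤ B t := by rw [← hBform]; exact key t ht0
    have : ‖y t‖ ^ 2 < r ^ 2 := lt_of_le_of_lt hgt hBt
    have hrpos : 0 < r := lt_of_le_of_lt (div_nonneg (norm_nonneg _) hm.le) hr
    have hn : ‖y t‖ ≤ r := by nlinarith [norm_nonneg (y t)]
    simpa [Metric.mem_closedBall, dist_zero_right] using hn
end

section
/- Let T be a Lorenz-like cusp map and let T_I be the first return map of T to I := (a₀′, a₀) \ {x₀}. Then T_I maps: the interval (a₀′, b₁′) onto (x₀, a₀); each interval (b_l′, b_{l+1}′), l ≥ 1, onto (a₀′, x₀); the interval (b₁, a₀) onto (x₀, a₀); and each interval (b_{l+1}, b_l), l ≥ 1, onto (a₀′, x₀). In particular the induced Markov system (I, T_I) is aperiodic. -/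
open Filter Set Asymptotics

/-- A Lorenz-like cusp map `T : [0,1] → [0,1]` with cusp point `x₀ ∈ (0,1)`:
increasing left branch from `T 0 = 0` to `1`, decreasing right branch from `1`
to `T 1 = 0` (both full), differentiable away from the endpoints and the cusp,
with the prescribed local behaviors near `0`, `1` and `x₀`, and a distortion-type
Hölder condition for the derivative on each branch. -/
structure LorenzLikeCuspMap where
  T : ℝ → ℝ
  x₀ : ℝ
  α' : ℝ
  β' : ℝ
  ψ : ℝ
  α : ℝ
  βt : ℝ
  κ : ℝ
  A : ℝ
  A' : ℝ
  B : ℝ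
  B' : ℝ
  C_h : ℝ
  ι : ℝ
  x₀_mem : x₀ ∈ Ioo (0 : ℝ) 1
  α'_gt_one : 1 < α'
  β'_pos : 0 < β'
  ψ_gt_one : 1 < ψ
  α_pos : 0 < α
  α_lt_one : α < 1
  βt_pos : 0 < βt
  κ_gt_one : 1 < κ
  A_pos : 0 < A
  A'_pos : 0 < A'
  B_mem : B ∈ Ioo (0 : ℝ) 1
  B'_mem : B' ∈ Ioo (0 : ℝ) 1
  maps_to : MapsTo T (Icc 0 1) (Icc 0 1)
  cont_left : ContinuousOn T (Ico 0 x₀)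
  mono_left : StrictMonoOn T (Ico 0 x₀)
  T_zero : T 0 = 0
  tendsto_cusp_left : Tendsto T (nhdsWithin x₀ (Iio x₀)) (nhds 1)
  cont_right : ContinuousOn T (Ioc x₀ 1)
  anti_right : StrictAntiOn T (Ioc x₀ 1)
  tendsto_cusp_right : Tendsto T (nhdsWithin x₀ (Ioi x₀)) (nhds 1)
  T_one : T 1 = 0
  full_left : Ioo (0 : ℝ) 1 ⊆ T '' Ioo 0 x₀
  full_right : Ioo (0 : ℝ) 1 ⊆ T '' Ioo x₀ 1
  diff : ∀ x ∈ Ioo (0 : ℝ) x₀ ∪ Ioo x₀ 1, DifferentiableAt ℝ T x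
  asymp_zero :
    (fun x => T x - (α' * x + β' * x ^ (1 + ψ))) =o[nhdsWithin 0 (Ioi 0)]
      fun x => x ^ (1 + ψ)
  deriv_zero :
    (fun x => deriv T x - α') =O[nhdsWithin 0 (Ioi 0)] fun x => x ^ ψ
  asymp_one :
    (fun x => T x - (α * (1 - x) + βt * (1 - x) ^ (1 + κ))) =o[nhdsWithin 1 (Iio 1)]
      fun x => (1 - x) ^ (1 + κ)
  deriv_one :
    (fun x => deriv T x + α) =O[nhdsWithin 1 (Iio 1)] fun x => (1 - x) ^ κ
  asymp_cusp_left :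
    (fun x => T x - (1 - A' * (x₀ - x) ^ B')) =o[nhdsWithin x₀ (Iio x₀)]
      fun x => (x₀ - x) ^ B'
  deriv_cusp_left : ∃ c₁ c₂ : ℝ, 0 < c₁ ∧
    ∀ᶠ x in nhdsWithin x₀ (Iio x₀),
      c₁ * (x₀ - x) ^ (B' - 1) ≤ deriv T x ∧ deriv T x ≤ c₂ * (x₀ - x) ^ (B' - 1)
  asymp_cusp_right :
    (fun x => T x - (1 - A * (x - x₀) ^ B)) =o[nhdsWithin x₀ (Ioi x₀)]
      fun x => (x - x₀) ^ B
  deriv_cusp_right : ∃ c₁ c₂ : ℝ, 0 < c₁ ∧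
    ∀ᶠ x in nhdsWithin x₀ (Ioi x₀),
      c₁ * (x - x₀) ^ (B - 1) ≤ |deriv T x| ∧ |deriv T x| ≤ c₂ * (x - x₀) ^ (B - 1)
  C_h_pos : 0 < C_h
  ι_mem : ι ∈ Ioc 0 (1 - max B B')
  holder_deriv : ∀ x y : ℝ,
    ((x ∈ Ioo 0 x₀ ∧ y ∈ Ioo 0 x₀) ∨ (x ∈ Ioo x₀ 1 ∧ y ∈ Ioo x₀ 1)) →
    |deriv T x - deriv T y| ≤ C_h * |deriv T x| * |deriv T y| * |x - y| ^ ι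

/-- First return time of `T` to the set `I` (with `sInf ∅ = 0` convention). -/
noncomputable def returnTime (T : ℝ → ℝ) (I : Set ℝ) (x : ℝ) : ℕ :=
  sInf {n : ℕ | 1 ≤ n ∧ T^[n] x ∈ I}

/-- First return map of `T` to the set `I`. -/
noncomputable def firstReturnMap (T : ℝ → ℝ) (I : Set ℝ) (x : ℝ) : ℝ :=
  T^[returnTime T I x] x

/-- Image of an open interval under a continuous strictly monotone map. -/
lemma image_Ioo_of_strictMonoOn {f : ℝ → ℝ} {s : Set ℝ} {u v : ℝ}
    (hc : ContinuousOn f s) (hm : StrictMonoOn f s) (hs : Icc u v ⊆ s) (huv : u < v) :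
    f '' Ioo u v = Ioo (f u) (f v) := by
  apply Subset.antisymm
  · rintro _ ⟨x, hx, rfl⟩
    have hxm : x ∈ Icc u v := ⟨hx.1.le, hx.2.le⟩
    exact ⟨hm (hs (left_mem_Icc.2 huv.le)) (hs hxm) hx.1,
           hm (hs hxm) (hs (right_mem_Icc.2 huv.le)) hx.2⟩
  · exact intermediate_value_Ioo huv.le (hc.mono hs)

/-- Image of an open interval under a continuous strictly antitone map. -/
lemma image_Ioo_of_strictAntiOn {f : ℝ → ℝ} {s : Set ℝ} {u v : ℝ}
    (hc : ContinuousOn f s) (hm : StrictAntiOn f s) (hs : Icc u v ⊆ s) (huv : u < v) :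
    f '' Ioo u v = Ioo (f v) (f u) := by
  apply Subset.antisymm
  · rintro _ ⟨x, hx, rfl⟩
    have hxm : x ∈ Icc u v := ⟨hx.1.le, hx.2.le⟩
    exact ⟨hm (hs hxm) (hs (right_mem_Icc.2 huv.le)) hx.2,
           hm (hs (left_mem_Icc.2 huv.le)) (hs hxm) hx.1⟩
  · exact intermediate_value_Ioo' huv.le (hc.mono hs)

/-- If the `n`-th iterate lands in `I` and no earlier (positive) iterate does,
then the first return map equals the `n`-th iterate. -/
lemma firstReturnMap_eq {T : ℝ → ℝ} {I : Set ℝ} {x : ℝ} {n : ℕ} (hn : 1 ≤ n)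
    (hmem : T^[n] x ∈ I) (hnot : ∀ j, 1 ≤ j → j < n → T^[j] x ∉ I) :
    firstReturnMap T I x = T^[n] x := by
  have hret : returnTime T I x = n := by
    have hnS : n ∈ {m : ℕ | 1 ≤ m ∧ T^[m] x ∈ I} := ⟨hn, hmem⟩
    refine le_antisymm (Nat.sInf_le hnS) ?_
    by_contra h
    push_neg at h
    have h2 := Nat.sInf_mem (⟨n, hnS⟩ : Set.Nonempty {m : ℕ | 1 ≤ m ∧ T^[m] x ∈ I})
    exact hnot _ h2.1 h h2.2
  rw [firstReturnMap, hret]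

/-- For a Lorenz-like cusp map T with the preimage sequences
a_p′ = T₁^{−p}(a₀′), a_p = T₂⁻¹(T₁^{−(p−1)}(a₀′)), and b_p ∈ (x₀,a₀),
b_p′ ∈ (a₀′,x₀) with T(b_p) = T(b_p′) = a_{p−1}, the first return map T_I on
I = (a₀′, a₀) \ {x₀} maps (a₀′, b₁′) onto (x₀, a₀); each (b_l′, b_{l+1}′), l ≥ 1,
onto (a₀′, x₀); (b₁, a₀) onto (x₀, a₀); and each (b_{l+1}, b_l), l ≥ 1, onto
(a₀′, x₀). In particular (b₁, a₀) is contained in the image of itself under T_I,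
so the induced Markov system (I, T_I) is aperiodic. -/
theorem firstReturnMap_markov_images (L : LorenzLikeCuspMap)
    (a' a b b' : ℕ → ℝ)
    (ha'0 : a' 0 ∈ Ioo (0 : ℝ) L.x₀ ∧ L.T (a' 0) = L.x₀)
    (ha0 : a 0 ∈ Ioo L.x₀ 1 ∧ L.T (a 0) = L.x₀)
    (ha' : ∀ p : ℕ, a' (p + 1) ∈ Ioo (0 : ℝ) (a' p) ∧ L.T (a' (p + 1)) = a' p)
    (ha : ∀ p : ℕ, 1 ≤ p → a p ∈ Ioo L.x₀ 1 ∧ L.T (a p) = a' (p - 1))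
    (hb : ∀ p : ℕ, 1 ≤ p → b p ∈ Ioo L.x₀ (a 0) ∧ L.T (b p) = a (p - 1))
    (hb' : ∀ p : ℕ, 1 ≤ p → b' p ∈ Ioo (a' 0) L.x₀ ∧ L.T (b' p) = a (p - 1)) :
    firstReturnMap L.T (Ioo (a' 0) (a 0) \ {L.x₀}) '' Ioo (a' 0) (b' 1)
        = Ioo L.x₀ (a 0) ∧
    (∀ l : ℕ, 1 ≤ l →
      firstReturnMap L.T (Ioo (a' 0) (a 0) \ {L.x₀}) '' Ioo (b' l) (b' (l + 1))
        = Ioo (a' 0) L.x₀) ∧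
    firstReturnMap L.T (Ioo (a' 0) (a 0) \ {L.x₀}) '' Ioo (b 1) (a 0)
        = Ioo L.x₀ (a 0) ∧
    (∀ l : ℕ, 1 ≤ l →
      firstReturnMap L.T (Ioo (a' 0) (a 0) \ {L.x₀}) '' Ioo (b (l + 1)) (b l)
        = Ioo (a' 0) L.x₀) ∧
    Ioo (b 1) (a 0) ⊆
      firstReturnMap L.T (Ioo (a' 0) (a 0) \ {L.x₀}) '' Ioo (b 1) (a 0) := by
  obtain ⟨ha'0m, hTa'0⟩ := ha'0
  obtain ⟨ha0m, hTa0⟩ := ha0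
  -- basic ordering facts
  have h0a' : 0 < a' 0 := ha'0m.1
  have ha'x : a' 0 < L.x₀ := ha'0m.2
  have hx₀a : L.x₀ < a 0 := ha0m.1
  have ha01 : a 0 < 1 := ha0m.2
  have ha'mem : ∀ p, a' p ∈ Ioo (0:ℝ) L.x₀ := by
    intro p; induction p with
    | zero => exact ha'0m
    | succ p ih => exact ⟨(ha' p).1.1, (ha' p).1.2.trans ih.2⟩
  have hTa' : ∀ p, L.T (a' (p+1)) = a' p := fun p => (ha' p).2
  have ha'succ : ∀ p, a' (p+1) < a' p := fun p => (ha' p).1.2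
  have ha'le0 : ∀ p, a' p ≤ a' 0 := by
    intro p; induction p with
    | zero => exact le_rfl
    | succ p ih => exact (ha'succ p).le.trans ih
  have hamem : ∀ p, a p ∈ Ioo L.x₀ 1 := by
    intro p; cases p with
    | zero => exact ha0m
    | succ p => exact (ha (p+1) (Nat.le_add_left 1 p)).1
  have hTa : ∀ p, L.T (a (p+1)) = a' p := by
    intro p
    have := (ha (p+1) (Nat.le_add_left 1 p)).2
    simpa using this
  have memRa : ∀ p, a p ∈ Ioc L.x₀ 1 := fun p => ⟨(hamem p).1, (hamem p).2.le⟩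
  have hasucc : ∀ p, a p < a (p+1) := by
    intro p
    refine (L.anti_right.lt_iff_gt (memRa (p+1)) (memRa p)).mp ?_
    cases p with
    | zero => rw [hTa 0, hTa0]; exact ha'x
    | succ q => rw [hTa (q+1), hTa q]; exact ha'succ q
  have ha0le : ∀ p, a 0 ≤ a p := by
    intro p; induction p with
    | zero => exact le_rfl
    | succ p ih => exact ih.trans (hasucc p).le
  have hbmem : ∀ p, b (p+1) ∈ Ioo L.x₀ (a 0) := fun p => (hb (p+1) (Nat.le_add_left 1 p)).1
  have hTb : ∀ p, L.T (b (p+1)) = a p := by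
    intro p; simpa using (hb (p+1) (Nat.le_add_left 1 p)).2
  have hb'mem : ∀ p, b' (p+1) ∈ Ioo (a' 0) L.x₀ := fun p => (hb' (p+1) (Nat.le_add_left 1 p)).1
  have hTb' : ∀ p, L.T (b' (p+1)) = a p := by
    intro p; simpa using (hb' (p+1) (Nat.le_add_left 1 p)).2
  have mb : ∀ r, b (r+1) ∈ Ioc L.x₀ 1 := fun r => ⟨(hbmem r).1, ((hbmem r).2.trans ha01).le⟩
  have mb' : ∀ r, b' (r+1) ∈ Ico (0:ℝ) L.x₀ :=
    fun r => ⟨(h0a'.trans (hb'mem r).1).le, (hb'mem r).2⟩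
  -- membership in / out of the return set I
  have notI_lo : ∀ {y : ℝ}, y < a' 0 → y ∉ Ioo (a' 0) (a 0) \ {L.x₀} :=
    fun h hy => absurd hy.1.1 (not_lt.2 h.le)
  have notI_hi : ∀ {y : ℝ}, a 0 < y → y ∉ Ioo (a' 0) (a 0) \ {L.x₀} :=
    fun h hy => absurd hy.1.2 (not_lt.2 h.le)
  have subI_L : Ioo (a' 0) L.x₀ ⊆ Ioo (a' 0) (a 0) \ {L.x₀} := by
    intro y hy
    exact ⟨⟨hy.1, hy.2.trans hx₀a⟩, by simp [ne_of_lt hy.2]⟩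
  have subI_R : Ioo L.x₀ (a 0) ⊆ Ioo (a' 0) (a 0) \ {L.x₀} := by
    intro y hy
    exact ⟨⟨ha'x.trans hy.1, hy.2⟩, by simp [(ne_of_lt hy.1).symm]⟩
  -- branch image computations
  have imgL : ∀ {u v : ℝ}, 0 < u → v < L.x₀ → u < v →
      L.T '' Ioo u v = Ioo (L.T u) (L.T v) := by
    intro u v hu hv huv
    exact image_Ioo_of_strictMonoOn L.cont_left L.mono_left
      (fun z hz => ⟨hu.le.trans hz.1, lt_of_le_of_lt hz.2 hv⟩) huv
  have imgR : ∀ {u v : ℝ}, L.x₀ < u → v ≤ 1 → u < v →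
      L.T '' Ioo u v = Ioo (L.T v) (L.T u) := by
    intro u v hu hv huv
    exact image_Ioo_of_strictAntiOn L.cont_right L.anti_right
      (fun z hz => ⟨lt_of_lt_of_le hu hz.1, hz.2.trans hv⟩) huv
  -- cascade through the a'-intervals
  have Q : ∀ p : ℕ,
      (∀ y ∈ Ioo (a' (p+1)) (a' p), L.T^[p+1] y ∈ Ioo (a' 0) L.x₀ ∧
        ∀ j, j ≤ p → L.T^[j] y ∉ Ioo (a' 0) (a 0) \ {L.x₀}) ∧
      L.T^[p+1] '' Ioo (a' (p+1)) (a' p) = Ioo (a' 0) L.x₀ := by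
    intro p; induction p with
    | zero =>
      have himg : L.T '' Ioo (a' 1) (a' 0) = Ioo (a' 0) L.x₀ := by
        rw [imgL (ha'mem 1).1 ha'x (ha'succ 0), hTa' 0, hTa'0]
      constructor
      · intro y hy
        constructor
        · have : L.T y ∈ L.T '' Ioo (a' 1) (a' 0) := mem_image_of_mem _ hy
          rw [himg] at this
          simpa using this
        · intro j hj
          have : j = 0 := Nat.le_zero.mp hj
          subst this
          simpa using notI_lo hy.2
      · simpa using himg
    | succ p ih =>
      have hstep : L.T '' Ioo (a' (p+2)) (a' (p+1)) = Ioo (a' (p+1)) (a' p) := by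
        rw [imgL (ha'mem (p+2)).1 (ha'mem (p+1)).2 (ha'succ (p+1)), hTa' (p+1), hTa' p]
      constructor
      · intro y hy
        have hTy : L.T y ∈ Ioo (a' (p+1)) (a' p) := by
          rw [← hstep]; exact mem_image_of_mem _ hy
        obtain ⟨hmem', hnot'⟩ := ih.1 (L.T y) hTy
        constructor
        · rw [Function.iterate_succ_apply]
          exact hmem'
        · intro j hj
          cases j with
          | zero => simpa using notI_lo (lt_of_lt_of_le hy.2 (ha'le0 (p+1)))
          | succ k =>
            rw [Function.iterate_succ_apply]
            exact hnot' k (Nat.succ_le_succ_iff.mp hj)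
      · rw [show L.T^[p+1+1] = L.T^[p+1] ∘ L.T from Function.iterate_succ L.T (p+1),
            image_comp, hstep, ih.2]
  -- cascade starting from the a-intervals
  have tail : ∀ m : ℕ,
      (∀ y ∈ Ioo (a m) (a (m+1)), L.T^[m+1] y ∈ Ioo (a' 0) L.x₀ ∧
        ∀ j, j ≤ m → L.T^[j] y ∉ Ioo (a' 0) (a 0) \ {L.x₀}) ∧
      L.T^[m+1] '' Ioo (a m) (a (m+1)) = Ioo (a' 0) L.x₀ := by
    intro m
    cases m with
    | zero =>
      have himg : L.T '' Ioo (a 0) (a 1) = Ioo (a' 0) L.x₀ := by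
        rw [imgR (hamem 0).1 (hamem 1).2.le (hasucc 0), hTa 0, hTa0]
      constructor
      · intro y hy
        constructor
        · have : L.T y ∈ L.T '' Ioo (a 0) (a 1) := mem_image_of_mem _ hy
          rw [himg] at this
          simpa using this
        · intro j hj
          have : j = 0 := Nat.le_zero.mp hj
          subst this
          simpa using notI_hi hy.1
      · simpa using himg
    | succ p =>
      have hstep : L.T '' Ioo (a (p+1)) (a (p+2)) = Ioo (a' (p+1)) (a' p) := by
        rw [imgR (hamem (p+1)).1 (hamem (p+2)).2.le (hasucc (p+1)), hTa (p+1), hTa p]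
      obtain ⟨Qpt, Qimg⟩ := Q p
      constructor
      · intro y hy
        have hTy : L.T y ∈ Ioo (a' (p+1)) (a' p) := by
          rw [← hstep]; exact mem_image_of_mem _ hy
        obtain ⟨hmem', hnot'⟩ := Qpt (L.T y) hTy
        constructor
        · rw [Function.iterate_succ_apply]
          exact hmem'
        · intro j hj
          cases j with
          | zero => simpa using notI_hi (lt_of_le_of_lt (ha0le (p+1)) hy.1)
          | succ k =>
            rw [Function.iterate_succ_apply]
            exact hnot' k (Nat.succ_le_succ_iff.mp hj)
      · rw [show L.T^[p+1+1] = L.T^[p+1] ∘ L.T from Function.iterate_succ L.T (p+1),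
            image_comp, hstep, Qimg]
  -- case 1 : (a'0, b'1) returns in one step onto (x₀, a 0)
  have case1 : firstReturnMap L.T (Ioo (a' 0) (a 0) \ {L.x₀}) '' Ioo (a' 0) (b' 1)
      = Ioo L.x₀ (a 0) := by
    have himg : L.T '' Ioo (a' 0) (b' 1) = Ioo L.x₀ (a 0) := by
      rw [imgL h0a' (hb'mem 0).2 (hb'mem 0).1, hTa'0, hTb' 0]
    have hFR : ∀ x ∈ Ioo (a' 0) (b' 1),
        firstReturnMap L.T (Ioo (a' 0) (a 0) \ {L.x₀}) x = L.T^[1] x := by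
      intro x hx
      have hTx : L.T x ∈ Ioo L.x₀ (a 0) := by
        rw [← himg]; exact mem_image_of_mem _ hx
      exact firstReturnMap_eq le_rfl (by simpa using subI_R hTx)
        (fun j hj1 hj2 => absurd hj2 (by omega))
    rw [image_congr hFR]
    simpa using himg
  -- case 3 : (b 1, a 0) returns in one step onto (x₀, a 0)
  have case3 : firstReturnMap L.T (Ioo (a' 0) (a 0) \ {L.x₀}) '' Ioo (b 1) (a 0)
      = Ioo L.x₀ (a 0) := by
    have himg : L.T '' Ioo (b 1) (a 0) = Ioo L.x₀ (a 0) := by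
      rw [imgR (hbmem 0).1 ha01.le (hbmem 0).2, hTa0, hTb 0]
    have hFR : ∀ x ∈ Ioo (b 1) (a 0),
        firstReturnMap L.T (Ioo (a' 0) (a 0) \ {L.x₀}) x = L.T^[1] x := by
      intro x hx
      have hTx : L.T x ∈ Ioo L.x₀ (a 0) := by
        rw [← himg]; exact mem_image_of_mem _ hx
      exact firstReturnMap_eq le_rfl (by simpa using subI_R hTx)
        (fun j hj1 hj2 => absurd hj2 (by omega))
    rw [image_congr hFR]
    simpa using himg
  -- case 2 : (b' (q+1), b' (q+2)) returns in q+2 steps onto (a' 0, x₀)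
  have case2 : ∀ q : ℕ,
      firstReturnMap L.T (Ioo (a' 0) (a 0) \ {L.x₀}) '' Ioo (b' (q+1)) (b' (q+2))
        = Ioo (a' 0) L.x₀ := by
    intro q
    have hb'lt : b' (q+1) < b' (q+2) := by
      refine (L.mono_left.lt_iff_lt (mb' q) (mb' (q+1))).mp ?_
      rw [hTb' q, hTb' (q+1)]
      exact hasucc q
    have hstep : L.T '' Ioo (b' (q+1)) (b' (q+2)) = Ioo (a q) (a (q+1)) := by
      rw [imgL (h0a'.trans (hb'mem q).1) (hb'mem (q+1)).2 hb'lt, hTb' q, hTb' (q+1)]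
    obtain ⟨tpt, timg⟩ := tail q
    have hFR : ∀ x ∈ Ioo (b' (q+1)) (b' (q+2)),
        firstReturnMap L.T (Ioo (a' 0) (a 0) \ {L.x₀}) x = L.T^[q+2] x := by
      intro x hx
      have hTx : L.T x ∈ Ioo (a q) (a (q+1)) := by
        rw [← hstep]; exact mem_image_of_mem _ hx
      obtain ⟨hm', hn'⟩ := tpt (L.T x) hTx
      refine firstReturnMap_eq (by omega) ?_ ?_
      · have e : L.T^[q+2] x = L.T^[q+1] (L.T x) := Function.iterate_succ_apply L.T (q+1) x
        rw [e]
        exact subI_L hm'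
      · intro j hj1 hj2
        cases j with
        | zero => omega
        | succ k =>
          rw [Function.iterate_succ_apply]
          exact hn' k (by omega)
    rw [image_congr hFR,
        show L.T^[q+2] = L.T^[q+1] ∘ L.T from Function.iterate_succ L.T (q+1),
        image_comp, hstep, timg]
  -- case 4 : (b (q+2), b (q+1)) returns in q+2 steps onto (a' 0, x₀)
  have case4 : ∀ q : ℕ,
      firstReturnMap L.T (Ioo (a' 0) (a 0) \ {L.x₀}) '' Ioo (b (q+2)) (b (q+1))
        = Ioo (a' 0) L.x₀ := by
    intro q
    have hblt : b (q+2) < b (q+1) := by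
      refine (L.anti_right.lt_iff_gt (mb q) (mb (q+1))).mp ?_
      rw [hTb q, hTb (q+1)]
      exact hasucc q
    have hstep : L.T '' Ioo (b (q+2)) (b (q+1)) = Ioo (a q) (a (q+1)) := by
      rw [imgR (hbmem (q+1)).1 ((hbmem q).2.trans ha01).le hblt, hTb q, hTb (q+1)]
    obtain ⟨tpt, timg⟩ := tail q
    have hFR : ∀ x ∈ Ioo (b (q+2)) (b (q+1)),
        firstReturnMap L.T (Ioo (a' 0) (a 0) \ {L.x₀}) x = L.T^[q+2] x := by
      intro x hx
      have hTx : L.T x ∈ Ioo (a q) (a (q+1)) := by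
        rw [← hstep]; exact mem_image_of_mem _ hx
      obtain ⟨hm', hn'⟩ := tpt (L.T x) hTx
      refine firstReturnMap_eq (by omega) ?_ ?_
      · have e : L.T^[q+2] x = L.T^[q+1] (L.T x) := Function.iterate_succ_apply L.T (q+1) x
        rw [e]
        exact subI_L hm'
      · intro j hj1 hj2
        cases j with
        | zero => omega
        | succ k =>
          rw [Function.iterate_succ_apply]
          exact hn' k (by omega)
    rw [image_congr hFR,
        show L.T^[q+2] = L.T^[q+1] ∘ L.T from Function.iterate_succ L.T (q+1),
        image_comp, hstep, timg]
  refine ⟨case1, ?_, case3, ?_, ?_⟩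
  · intro l hl
    obtain ⟨q, rfl⟩ : ∃ q, l = q + 1 := ⟨l - 1, by omega⟩
    exact case2 q
  · intro l hl
    obtain ⟨q, rfl⟩ : ∃ q, l = q + 1 := ⟨l - 1, by omega⟩
    exact case4 q
  · rw [case3]
    exact fun x hx => ⟨(hbmem 0).1.trans hx.1, hx.2⟩
end

section
/- Let x₀ > 0, 0 < B < 1, θ ∈ (0,1], and let G : (0,x₀) → ℝ be θ-Hölder continuous with δ ≤ 1 + G(x) ≤ Δ on (0,x₀) for some constants 0 < δ ≤ Δ < ∞. Define f(x) := (x₀ − x)^{B−1}(1 + G(x)). Then, with ι := min(θ, 1 − B), there exists a constant C > 0 such that |f(x) − f(y)| ≤ C |f(x)| |f(y)| |x − y|^ι for all x, y ∈ (0, x₀). -/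
open Set

lemma my_rpow_add_le (a b p : ℝ) (ha : 0 ≤ a) (hb : 0 ≤ b) (hp : 0 ≤ p) (hp1 : p ≤ 1) :
    (a + b) ^ p ≤ a ^ p + b ^ p := by
  lift a to NNReal using ha
  lift b to NNReal using hb
  exact_mod_cast NNReal.rpow_add_le_add_rpow a b hp hp1

lemma my_aux_sub {p u v : ℝ} (hp0 : 0 < p) (hp1 : p ≤ 1) (hu : 0 < u) (huv : u ≤ v) :
    u ^ (-p) - v ^ (-p) ≤ u ^ (-p) * v ^ (-p) * (v - u) ^ p := by
  have hv : 0 < v := lt_of_lt_of_le hu huv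
  have hup : 0 < u ^ p := Real.rpow_pos_of_pos hu p
  have hvp : 0 < v ^ p := Real.rpow_pos_of_pos hv p
  have hsub : v ^ p ≤ u ^ p + (v - u) ^ p := by
    have h := my_rpow_add_le u (v - u) p hu.le (sub_nonneg.2 huv) hp0.le hp1
    simpa using h
  rw [Real.rpow_neg hu.le, Real.rpow_neg hv.le]
  have h1 : (u ^ p)⁻¹ - (v ^ p)⁻¹ = (v ^ p - u ^ p) * ((u ^ p)⁻¹ * (v ^ p)⁻¹) := by
    field_simp
  rw [h1]
  have h2 : v ^ p - u ^ p ≤ (v - u) ^ p := by linarith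
  calc (v ^ p - u ^ p) * ((u ^ p)⁻¹ * (v ^ p)⁻¹)
      ≤ (v - u) ^ p * ((u ^ p)⁻¹ * (v ^ p)⁻¹) := by
        apply mul_le_mul_of_nonneg_right h2; positivity
    _ = (u ^ p)⁻¹ * (v ^ p)⁻¹ * (v - u) ^ p := by ring

lemma my_aux_abs {p u v : ℝ} (hp0 : 0 < p) (hp1 : p ≤ 1) (hu : 0 < u) (hv : 0 < v) :
    |u ^ (-p) - v ^ (-p)| ≤ u ^ (-p) * v ^ (-p) * |v - u| ^ p := by
  rcases le_total u v with h | h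
  · have hmono : v ^ (-p) ≤ u ^ (-p) :=
      Real.rpow_le_rpow_of_nonpos hu h (by linarith)
    rw [abs_of_nonneg (by linarith), abs_of_nonneg (by linarith)]
    exact my_aux_sub hp0 hp1 hu h
  · have hmono : u ^ (-p) ≤ v ^ (-p) :=
      Real.rpow_le_rpow_of_nonpos hv h (by linarith)
    rw [abs_of_nonpos (by linarith), abs_of_nonpos (by linarith), neg_sub, neg_sub]
    have := my_aux_sub hp0 hp1 hv h
    calc v ^ (-p) - u ^ (-p) ≤ v ^ (-p) * u ^ (-p) * (u - v) ^ p := this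
      _ = u ^ (-p) * v ^ (-p) * (u - v) ^ p := by ring

-- t^(a+b) ≤ M^a * t^b for 0 ≤ t ≤ M, 0 ≤ a, 0 ≤ b, a+b ≠ 0
lemma my_split (t M a b : ℝ) (ht : 0 ≤ t) (htM : t ≤ M) (ha : 0 ≤ a) (hb : 0 ≤ b)
    (hab : a + b ≠ 0) : t ^ (a + b) ≤ M ^ a * t ^ b := by
  rw [Real.rpow_add' ht hab]
  have : t ^ a ≤ M ^ a := Real.rpow_le_rpow ht htM ha
  apply mul_le_mul_of_nonneg_right this (Real.rpow_nonneg ht b)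

/-- If f(x) = (x₀ − x)^{B−1}(1 + G(x)) on (0,x₀) with G
θ-Hölder and δ ≤ 1 + G ≤ Δ, then with ι = min(θ, 1 − B) there is C > 0 such that
|f(x) − f(y)| ≤ C|f(x)||f(y)||x − y|^ι for all x, y ∈ (0, x₀). -/
theorem cusp_derivative_distortion_holder
    (x₀ B θ δ Δ : ℝ) (hx₀ : 0 < x₀) (hB : 0 < B) (hB1 : B < 1)
    (hθ : θ ∈ Ioc (0 : ℝ) 1) (hδ : 0 < δ) (hδΔ : δ ≤ Δ)
    (G : ℝ → ℝ) (Hc : ℝ)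
    (hHolder : ∀ x ∈ Ioo (0 : ℝ) x₀, ∀ y ∈ Ioo (0 : ℝ) x₀,
      |G x - G y| ≤ Hc * |x - y| ^ θ)
    (hbound : ∀ x ∈ Ioo (0 : ℝ) x₀, δ ≤ 1 + G x ∧ 1 + G x ≤ Δ)
    (f : ℝ → ℝ) (hf : ∀ x ∈ Ioo (0 : ℝ) x₀, f x = (x₀ - x) ^ (B - 1) * (1 + G x)) :
    ∃ C : ℝ, 0 < C ∧ ∀ x ∈ Ioo (0 : ℝ) x₀, ∀ y ∈ Ioo (0 : ℝ) x₀,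
      |f x - f y| ≤ C * |f x| * |f y| * |x - y| ^ min θ (1 - B) := by
  obtain ⟨hθ0, hθ1⟩ := hθ
  set ι := min θ (1 - B) with hι_def
  have hp0 : (0 : ℝ) < 1 - B := by linarith
  have hι0 : 0 < ι := lt_min hθ0 hp0
  have hιθ : ι ≤ θ := min_le_left _ _
  have hιp : ι ≤ 1 - B := min_le_right _ _
  set K : ℝ := Δ * x₀ ^ (1 - B - ι) + |Hc| * x₀ ^ (θ - ι + (1 - B)) with hK_def
  have hΔ0 : (0:ℝ) < Δ := lt_of_lt_of_le hδ hδΔ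
  have hK0 : 0 ≤ K := by
    rw [hK_def]
    have h1 : (0:ℝ) ≤ x₀ ^ (1 - B - ι) := Real.rpow_nonneg hx₀.le _
    have h2 : (0:ℝ) ≤ x₀ ^ (θ - ι + (1 - B)) := Real.rpow_nonneg hx₀.le _
    have h3 : (0:ℝ) ≤ |Hc| := abs_nonneg _
    nlinarith
  refine ⟨K / δ ^ 2 + 1, add_pos_of_nonneg_of_pos (div_nonneg hK0 (by positivity)) one_pos, ?_⟩
  intro x hx y hy
  obtain ⟨hx0, hxx⟩ := hx
  obtain ⟨hy0, hyy⟩ := hy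
  set u := x₀ - x with hu_def
  set v := x₀ - y with hv_def
  have hu : 0 < u := by simp [hu_def]; linarith
  have hv : 0 < v := by simp [hv_def]; linarith
  have hux : u ≤ x₀ := by simp [hu_def]; linarith
  have hvx : v ≤ x₀ := by simp [hv_def]; linarith
  have huq : 0 < u ^ (B - 1) := Real.rpow_pos_of_pos hu _
  have hvq : 0 < v ^ (B - 1) := Real.rpow_pos_of_pos hv _
  obtain ⟨hGx1, hGx2⟩ := hbound x ⟨hx0, hxx⟩
  obtain ⟨hGy1, hGy2⟩ := hbound y ⟨hy0, hyy⟩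
  have hGx0 : 0 < 1 + G x := lt_of_lt_of_le hδ hGx1
  have hGy0 : 0 < 1 + G y := lt_of_lt_of_le hδ hGy1
  have hfx : f x = u ^ (B - 1) * (1 + G x) := hf x ⟨hx0, hxx⟩
  have hfy : f y = v ^ (B - 1) * (1 + G y) := hf y ⟨hy0, hyy⟩
  have hfxa : |f x| = u ^ (B - 1) * (1 + G x) := by
    rw [hfx, abs_of_pos (by positivity)]
  have hfya : |f y| = v ^ (B - 1) * (1 + G y) := by
    rw [hfy, abs_of_pos (by positivity)]
  have hfx_lb : u ^ (B - 1) * δ ≤ |f x| := by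
    rw [hfxa]; exact mul_le_mul_of_nonneg_left hGx1 huq.le
  have hfy_lb : v ^ (B - 1) * δ ≤ |f y| := by
    rw [hfya]; exact mul_le_mul_of_nonneg_left hGy1 hvq.le
  have hxyabs : |x - y| ≤ x₀ := by
    rw [abs_le]; constructor <;> linarith
  have hxy0 : (0:ℝ) ≤ |x - y| := abs_nonneg _
  -- decomposition
  have hdecomp : f x - f y =
      (u ^ (B - 1) - v ^ (B - 1)) * (1 + G x) + v ^ (B - 1) * (G x - G y) := by
    rw [hfx, hfy]; ring
  have hq : B - 1 = -(1 - B) := by ring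
  -- term A bound
  have hA : |u ^ (B - 1) - v ^ (B - 1)| ≤
      u ^ (B - 1) * v ^ (B - 1) * |x - y| ^ (1 - B) := by
    have h := my_aux_abs (p := 1 - B) hp0 (by linarith) hu hv
    rw [hq]
    have hvu : v - u = x - y := by rw [hu_def, hv_def]; ring
    rwa [hvu] at h
  -- |x-y|^(1-B) ≤ x₀^(1-B-ι) * |x-y|^ι
  have hsplit1 : |x - y| ^ (1 - B) ≤ x₀ ^ (1 - B - ι) * |x - y| ^ ι := by
    have h := my_split |x - y| x₀ (1 - B - ι) ι hxy0 hxyabs (by linarith) hι0.le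
      (by intro h; linarith)
    have he : 1 - B - ι + ι = 1 - B := by ring
    rwa [he] at h
  -- |x-y|^θ ≤ x₀^(θ-ι) * |x-y|^ι
  have hsplit2 : |x - y| ^ θ ≤ x₀ ^ (θ - ι) * |x - y| ^ ι := by
    have h := my_split |x - y| x₀ (θ - ι) ι hxy0 hxyabs (by linarith) hι0.le
      (by intro h; linarith)
    have he : θ - ι + ι = θ := by ring
    rwa [he] at h
  -- 1 ≤ x₀^(1-B) * u^(B-1)
  have hone : 1 ≤ x₀ ^ (1 - B) * u ^ (B - 1) := by
    have h1 : x₀ ^ (B - 1) ≤ u ^ (B - 1) :=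
      Real.rpow_le_rpow_of_nonpos hu hux (by linarith)
    have h2 : x₀ ^ (1 - B) * x₀ ^ (B - 1) = 1 := by
      rw [← Real.rpow_add hx₀]; norm_num
    calc (1:ℝ) = x₀ ^ (1 - B) * x₀ ^ (B - 1) := h2.symm
      _ ≤ x₀ ^ (1 - B) * u ^ (B - 1) := by
          apply mul_le_mul_of_nonneg_left h1 (Real.rpow_nonneg hx₀.le _)
  have hG : |G x - G y| ≤ |Hc| * |x - y| ^ θ := by
    calc |G x - G y| ≤ Hc * |x - y| ^ θ := hHolder x ⟨hx0, hxx⟩ y ⟨hy0, hyy⟩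
      _ ≤ |Hc| * |x - y| ^ θ := by
          apply mul_le_mul_of_nonneg_right (le_abs_self Hc) (Real.rpow_nonneg hxy0 θ)
  -- main chain
  have hmain : |f x - f y| ≤ K * (u ^ (B - 1) * v ^ (B - 1) * |x - y| ^ ι) := by
    rw [hdecomp]
    have habs : |(u ^ (B - 1) - v ^ (B - 1)) * (1 + G x) + v ^ (B - 1) * (G x - G y)|
        ≤ |u ^ (B - 1) - v ^ (B - 1)| * (1 + G x) + v ^ (B - 1) * |G x - G y| := by
      calc _ ≤ |(u ^ (B - 1) - v ^ (B - 1)) * (1 + G x)| + |v ^ (B - 1) * (G x - G y)| :=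
              abs_add_le _ _
        _ = |u ^ (B - 1) - v ^ (B - 1)| * (1 + G x) + v ^ (B - 1) * |G x - G y| := by
              rw [abs_mul, abs_mul, abs_of_pos hGx0, abs_of_pos hvq]
    refine habs.trans ?_
    have hA' : |u ^ (B - 1) - v ^ (B - 1)| * (1 + G x) ≤
        Δ * x₀ ^ (1 - B - ι) * (u ^ (B - 1) * v ^ (B - 1) * |x - y| ^ ι) := by
      calc |u ^ (B - 1) - v ^ (B - 1)| * (1 + G x)
          ≤ (u ^ (B - 1) * v ^ (B - 1) * |x - y| ^ (1 - B)) * Δ := by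
            apply mul_le_mul hA hGx2 hGx0.le (by positivity)
        _ ≤ (u ^ (B - 1) * v ^ (B - 1) * (x₀ ^ (1 - B - ι) * |x - y| ^ ι)) * Δ := by
            apply mul_le_mul_of_nonneg_right _ (by linarith)
            apply mul_le_mul_of_nonneg_left hsplit1 (by positivity)
        _ = Δ * x₀ ^ (1 - B - ι) * (u ^ (B - 1) * v ^ (B - 1) * |x - y| ^ ι) := by ring
    have hB' : v ^ (B - 1) * |G x - G y| ≤
        |Hc| * x₀ ^ (θ - ι + (1 - B)) * (u ^ (B - 1) * v ^ (B - 1) * |x - y| ^ ι) := by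
      calc v ^ (B - 1) * |G x - G y|
          ≤ v ^ (B - 1) * (|Hc| * (x₀ ^ (θ - ι) * |x - y| ^ ι)) := by
            apply mul_le_mul_of_nonneg_left _ hvq.le
            refine hG.trans ?_
            apply mul_le_mul_of_nonneg_left hsplit2 (abs_nonneg _)
        _ ≤ (x₀ ^ (1 - B) * u ^ (B - 1)) * (v ^ (B - 1) * (|Hc| * (x₀ ^ (θ - ι) * |x - y| ^ ι))) := by
            nth_rewrite 1 [← one_mul (v ^ (B - 1) * _)]
            apply mul_le_mul_of_nonneg_right hone (by positivity)
        _ = |Hc| * (x₀ ^ (θ - ι) * x₀ ^ (1 - B)) * (u ^ (B - 1) * v ^ (B - 1) * |x - y| ^ ι) := by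
            ring
        _ = |Hc| * x₀ ^ (θ - ι + (1 - B)) * (u ^ (B - 1) * v ^ (B - 1) * |x - y| ^ ι) := by
            rw [← Real.rpow_add hx₀]
    calc _ ≤ Δ * x₀ ^ (1 - B - ι) * (u ^ (B - 1) * v ^ (B - 1) * |x - y| ^ ι)
            + |Hc| * x₀ ^ (θ - ι + (1 - B)) * (u ^ (B - 1) * v ^ (B - 1) * |x - y| ^ ι) :=
          add_le_add hA' hB'
      _ = K * (u ^ (B - 1) * v ^ (B - 1) * |x - y| ^ ι) := by rw [hK_def]; ring
  -- finish: u^q v^q ≤ |fx||fy|/δ²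
  have hprod : δ ^ 2 * (u ^ (B - 1) * v ^ (B - 1)) ≤ |f x| * |f y| := by
    calc δ ^ 2 * (u ^ (B - 1) * v ^ (B - 1))
        = (u ^ (B - 1) * δ) * (v ^ (B - 1) * δ) := by ring
      _ ≤ |f x| * |f y| := by
          apply mul_le_mul hfx_lb hfy_lb (by positivity) (abs_nonneg _)
  have hxyι : 0 ≤ |x - y| ^ ι := Real.rpow_nonneg hxy0 ι
  calc |f x - f y| ≤ K * (u ^ (B - 1) * v ^ (B - 1) * |x - y| ^ ι) := hmain
    _ = (K / δ ^ 2) * (δ ^ 2 * (u ^ (B - 1) * v ^ (B - 1))) * |x - y| ^ ι := by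
        field_simp
    _ ≤ (K / δ ^ 2) * (|f x| * |f y|) * |x - y| ^ ι := by
        apply mul_le_mul_of_nonneg_right _ hxyι
        apply mul_le_mul_of_nonneg_left hprod (by positivity)
    _ ≤ (K / δ ^ 2 + 1) * (|f x| * |f y|) * |x - y| ^ ι := by
        apply mul_le_mul_of_nonneg_right _ hxyι
        apply mul_le_mul_of_nonneg_right _ (by positivity)
        linarith
    _ = (K / δ ^ 2 + 1) * |f x| * |f y| * |x - y| ^ ι := by ring
end

section
/- Let M be a compact metric space, (ν_ε)_{ε>0} probability measures on M converging weakly to a probability measure ν as ε ↓ 0, and for each ε let λ_ε be a probability measure on [−1,1] with support contained in [−ε, ε]. Let (η, x) ↦ τ_η(x) be a jointly measurable family of functions τ_η : M → (0, ∞), each continuous, with τ₀ continuous, inf_{M} τ₀ > 0, sup_{M,η} τ_η < ∞, and sup_{|η| ≤ ε} ‖τ_η − τ₀‖_∞ → 0 as ε ↓ 0. Set F^ε(s; x) := λ_ε{η : τ_η(x) ≤ s}. Then for every bounded continuous φ : M × [0,∞) → ℝ, lim_{ε→0} [ ∫ λ_ε(dη) ∫ ν_ε(dx) ∫₀^{τ_η(x)}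 φ(x,s) ds ] / [ ∫ ν_ε(dx) ∫₀^∞ (1 − F^ε(s;x)) ds ] = (1/∫ τ₀ dν) ∫ ν(dx) ∫₀^{τ₀(x)} φ(x,s) ds. In particular, if ν_ε are the stationary measures of the perturbed Poincaré chains and they converge weakly to the invariant measure of the unperturbed Poincaré map, then the stationary measures μ_ε of the randomly perturbed flow converge weakly to the measure of the suspension flow with roof τ₀, i.e. to the unperturbed physical measure. -/
open MeasureTheory Set Filter

/-- A bounded a.e.-strongly-measurable real function is integrable w.r.t. a finite measure. -/
lemma integrable_of_abs_le {α : Type*} [MeasurableSpace α] {μ : Measure α} [IsFiniteMeasure μ]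
    {f : α → ℝ} (hf : AEStronglyMeasurable f μ) {C : ℝ} (hC : ∀ x, |f x| ≤ C) :
    Integrable f μ :=
  ⟨hf, HasFiniteIntegral.of_bounded (C := C)
    (ae_of_all _ fun x => by simpa [Real.norm_eq_abs] using hC x)⟩

/-- Layer-cake / tail formula for a positive bounded measurable function against a
probability measure: `∫₀^∞ (1 - λ{g ≤ s}) ds = ∫ g dλ`. -/
lemma den_inner_eq {lam : Measure ℝ} [IsProbabilityMeasure lam] {g : ℝ → ℝ}
    (hg : Measurable g) (hgpos : ∀ η, 0 < g η) {C : ℝ} (hgC : ∀ η, g η ≤ C) :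
    (∫ s in Ioi (0 : ℝ), (1 - (lam {η : ℝ | g η ≤ s}).toReal)) = ∫ η, g η ∂lam := by
  have hint : Integrable g lam :=
    integrable_of_abs_le hg.aestronglyMeasurable
      (fun η => by rw [abs_of_pos (hgpos η)]; exact hgC η)
  rw [hint.integral_eq_integral_meas_lt (ae_of_all _ fun η => (hgpos η).le)]
  refine integral_congr_ae (ae_of_all _ fun s => ?_)
  show 1 - (lam {η : ℝ | g η ≤ s}).toReal = (lam {a : ℝ | s < g a}).toReal
  have hms : MeasurableSet {η : ℝ | g η ≤ s} := hg measurableSet_Iic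
  have hset : {η : ℝ | s < g η} = {η : ℝ | g η ≤ s}ᶜ := by
    ext η; simp [not_le]
  rw [hset, prob_compl_eq_one_sub hms,
    ENNReal.toReal_sub_of_le prob_le_one ENNReal.one_ne_top, ENNReal.toReal_one]

set_option maxHeartbeats 8000000 in
/-- Let M be a compact metric space, ν_ε → ν weakly as ε ↓ 0,
λ_ε probability measures supported in [−ε,ε], and τ_η : M → (0,∞) return-time
functions, continuous, uniformly bounded above and below, with τ_η → τ₀
uniformly as the noise size vanishes. Setting F^ε(s;x) = λ_ε{η : τ_η(x) ≤ s},
for every bounded continuous φ the normalized averages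
[∫λ_ε(dη)∫ν_ε(dx)∫₀^{τ_η(x)}φ(x,s)ds] / [∫ν_ε(dx)∫₀^∞(1 − F^ε(s;x))ds]
converge to (∫τ₀ dν)⁻¹ ∫ν(dx)∫₀^{τ₀(x)} φ(x,s) ds; i.e. the stationary measures
of the randomly perturbed flow converge weakly to the measure of the suspension
flow with roof τ₀ — the unperturbed physical measure. -/
theorem stationary_measures_converge_to_suspension
    {M : Type*} [MetricSpace M] [CompactSpace M] [MeasurableSpace M] [BorelSpace M]
    (ν : ℝ → Measure M) (ν₀ : Measure M)
    (hνprob : ∀ ε : ℝ, 0 < ε → IsProbabilityMeasure (ν ε))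
    [IsProbabilityMeasure ν₀]
    (hweak : ∀ f : M → ℝ, Continuous f →
      Tendsto (fun ε => ∫ x, f x ∂ν ε) (nhdsWithin 0 (Ioi 0)) (nhds (∫ x, f x ∂ν₀)))
    (lam : ℝ → Measure ℝ)
    (hlamprob : ∀ ε : ℝ, 0 < ε → IsProbabilityMeasure (lam ε))
    (hlamsupp : ∀ ε : ℝ, 0 < ε → lam ε (Icc (-ε) ε)ᶜ = 0)
    (τ : ℝ → M → ℝ)
    (hτmeas : Measurable fun p : ℝ × M => τ p.1 p.2)
    (hτcont : ∀ η : ℝ, Continuous (τ η))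
    (hτpos : ∀ η x, 0 < τ η x)
    (hτ₀inf : ∃ t₀ : ℝ, 0 < t₀ ∧ ∀ x, t₀ ≤ τ 0 x)
    (hτbdd : ∃ Cτ : ℝ, ∀ η x, τ η x ≤ Cτ)
    (hτunif : ∀ δ : ℝ, 0 < δ → ∃ εb : ℝ, 0 < εb ∧
      ∀ η : ℝ, |η| ≤ εb → ∀ x, |τ η x - τ 0 x| ≤ δ) :
    ∀ φ : M × ℝ → ℝ, Continuous φ → (∃ Cφ : ℝ, ∀ p, |φ p| ≤ Cφ) →
      Tendsto
        (fun ε =>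
          (∫ η, ∫ x, (∫ s in (0 : ℝ)..(τ η x), φ (x, s)) ∂ν ε ∂lam ε) /
            (∫ x, (∫ s in Ioi (0 : ℝ), (1 - (lam ε {η : ℝ | τ η x ≤ s}).toReal)) ∂ν ε))
        (nhdsWithin 0 (Ioi 0))
        (nhds ((∫ x, (∫ s in (0 : ℝ)..(τ 0 x), φ (x, s)) ∂ν₀) / (∫ x, τ 0 x ∂ν₀))) := by
  intro φ hφc hφbdd
  obtain ⟨Cφ₀, hCφ₀⟩ := hφbdd
  obtain ⟨t₀, ht₀pos, ht₀le⟩ := hτ₀inf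
  obtain ⟨Cτ₀, hCτ₀⟩ := hτbdd
  -- adjusted nonnegative bounds
  set Cφ : ℝ := max Cφ₀ 0 with hCφdef
  have hCφ : ∀ p, |φ p| ≤ Cφ := fun p => (hCφ₀ p).trans (le_max_left _ _)
  have hCφ0 : 0 ≤ Cφ := le_max_right _ _
  set Cτ : ℝ := max Cτ₀ 0 with hCτdef
  have hCτ : ∀ η x, τ η x ≤ Cτ := fun η x => (hCτ₀ η x).trans (le_max_left _ _)
  have hCτ0 : 0 ≤ Cτ := le_max_right _ _
  -- an opaque continuous primitive function
  obtain ⟨Φ, hΦeq, hΦcont⟩ : ∃ Φ : ℝ × M → ℝ,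
      (∀ (a : ℝ) (x : M), Φ (a, x) = ∫ s in (0 : ℝ)..a, φ (x, s)) ∧ Continuous Φ := by
    refine ⟨fun q : ℝ × M => ∫ s in (0 : ℝ)..q.1, φ (q.2, s), fun a x => rfl, ?_⟩
    refine intervalIntegral.continuous_parametric_intervalIntegral_of_continuous
      (f := fun (q : ℝ × M) s => φ (q.2, s)) ?_ continuous_fst
    exact hφc.comp (by fun_prop)
  simp only [← hΦeq]
  -- joint measurability of (η, x) ↦ Φ (τ η x, x)
  have hhmeas : Measurable (fun p : ℝ × M => Φ (τ p.1 p.2, p.2)) :=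
    hΦcont.measurable.comp (hτmeas.prodMk measurable_snd)
  -- continuity of x ↦ Φ (τ η x, x) for fixed η
  have hhcont : ∀ η : ℝ, Continuous (fun x : M => Φ (τ η x, x)) := fun η =>
    hΦcont.comp ((hτcont η).prodMk continuous_id)
  -- interval integrability of s ↦ φ(x, s)
  have hII : ∀ (x : M) (a b : ℝ), IntervalIntegrable (fun s => φ (x, s)) volume a b := by
    intro x a b
    exact (hφc.comp (Continuous.prodMk_right x)).intervalIntegrable a b
  -- Lipschitz-type bound in the upper endpoint
  have hkey : ∀ (η : ℝ) (x : M),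
      |Φ (τ η x, x) - Φ (τ 0 x, x)| ≤ Cφ * |τ η x - τ 0 x| := by
    intro η x
    rw [hΦeq, hΦeq,
      intervalIntegral.integral_interval_sub_left (hII x 0 (τ η x)) (hII x 0 (τ 0 x))]
    have := intervalIntegral.norm_integral_le_of_norm_le_const
      (a := τ 0 x) (b := τ η x) (C := Cφ) (f := fun s => φ (x, s))
      (fun s _ => by simpa [Real.norm_eq_abs] using hCφ (x, s))
    simpa [Real.norm_eq_abs] using this
  -- uniform bound for the primitive
  have hhbdd : ∀ (η : ℝ) (x : M), |Φ (τ η x, x)| ≤ Cφ * Cτ := by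
    intro η x
    rw [hΦeq]
    have := intervalIntegral.norm_integral_le_of_norm_le_const
      (a := (0 : ℝ)) (b := τ η x) (C := Cφ) (f := fun s => φ (x, s))
      (fun s _ => by simpa [Real.norm_eq_abs] using hCφ (x, s))
    rw [Real.norm_eq_abs] at this
    refine this.trans ?_
    have h0 : |τ η x - 0| = τ η x := by
      rw [sub_zero, abs_of_pos (hτpos η x)]
    rw [h0]
    exact mul_le_mul_of_nonneg_left (hCτ η x) hCφ0
  -- notation
  set G : M → ℝ := fun x => Φ (τ 0 x, x) with hGdef
  have hGcont : Continuous G := hhcont 0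
  have hGbdd : ∀ x, |G x| ≤ Cφ * Cτ := fun x => hhbdd 0 x
  set B : ℝ := ∫ x, τ 0 x ∂ν₀ with hBdef
  -- τ 0 is integrable w.r.t. any finite measure on M
  have hτ0abs : ∀ x, |τ 0 x| ≤ Cτ := fun x => by
    rw [abs_of_pos (hτpos 0 x)]; exact hCτ 0 x
  have hτ0int : ∀ (μ : Measure M), IsFiniteMeasure μ → Integrable (τ 0) μ := by
    intro μ hμ
    haveI := hμ
    exact integrable_of_abs_le (hτcont 0).aestronglyMeasurable hτ0abs
  -- the denominator limit is positive
  have hBpos : 0 < B := by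
    have h1 : t₀ = ∫ _x, t₀ ∂ν₀ := by simp
    have h2 : (∫ _x, t₀ ∂ν₀) ≤ B :=
      integral_mono (integrable_const _) (hτ0int ν₀ inferInstance) ht₀le
    linarith
  -- a.e. support of lam ε
  have hae : ∀ ε : ℝ, 0 < ε → ∀ᵐ η ∂lam ε, η ∈ Icc (-ε) ε := by
    intro ε hε
    rw [ae_iff]
    have h0 : {η : ℝ | ¬ η ∈ Icc (-ε) ε} = (Icc (-ε) ε)ᶜ := rfl
    rw [h0]
    exact hlamsupp ε hε
  -- measurability of η ↦ τ η x
  have hτmeas1 : ∀ x : M, Measurable (fun η : ℝ => τ η x) := by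
    intro x
    exact hτmeas.comp (measurable_id.prodMk measurable_const)
  -- integrability of η ↦ τ η x
  have hτintlam : ∀ (ε : ℝ), 0 < ε → ∀ x : M, Integrable (fun η => τ η x) (lam ε) := by
    intro ε hε x
    haveI := hlamprob ε hε
    exact integrable_of_abs_le (hτmeas1 x).aestronglyMeasurable
      (fun η => by rw [abs_of_pos (hτpos η x)]; exact hCτ η x)
  ----------------------------------------------------------------
  -- Denominator: tends to B
  ----------------------------------------------------------------
  have hden : Tendsto
      (fun ε => ∫ x, (∫ s in Ioi (0 : ℝ), (1 - (lam ε {η : ℝ | τ η x ≤ s}).toReal)) ∂ν ε)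
      (nhdsWithin 0 (Ioi 0)) (nhds B) := by
    -- rewrite the inner integral via the layer cake formula
    have hcong : (fun ε => ∫ x, (∫ s in Ioi (0 : ℝ),
          (1 - (lam ε {η : ℝ | τ η x ≤ s}).toReal)) ∂ν ε)
        =ᶠ[nhdsWithin (0:ℝ) (Ioi 0)] fun ε => ∫ x, (∫ η, τ η x ∂lam ε) ∂ν ε := by
      filter_upwards [self_mem_nhdsWithin] with ε hε
      haveI := hlamprob ε hε
      refine integral_congr_ae (ae_of_all _ fun x => ?_)
      exact den_inner_eq (hτmeas1 x) (fun η => hτpos η x) (hCτ · x)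
    rw [tendsto_congr' hcong]
    -- compare with ∫ τ 0 dν ε
    have h1 : Tendsto (fun ε => ∫ x, τ 0 x ∂ν ε) (nhdsWithin (0:ℝ) (Ioi 0)) (nhds B) :=
      hweak (τ 0) (hτcont 0)
    have h2 : Tendsto
        (fun ε => (∫ x, (∫ η, τ η x ∂lam ε) ∂ν ε) - ∫ x, τ 0 x ∂ν ε)
        (nhdsWithin (0:ℝ) (Ioi 0)) (nhds 0) := by
      rw [Metric.tendsto_nhds]
      intro δ hδ
      obtain ⟨εb, hεb, hub⟩ := hτunif (δ / 2) (half_pos hδ)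
      filter_upwards [Ioo_mem_nhdsGT_of_mem (⟨le_refl (0:ℝ), hεb⟩ : (0:ℝ) ∈ Ico 0 εb)]
        with ε hε
      haveI := hlamprob ε hε.1
      haveI := hνprob ε hε.1
      -- pointwise bound
      have hptw : ∀ x, |(∫ η, τ η x ∂lam ε) - τ 0 x| ≤ δ / 2 := by
        intro x
        have heq : (∫ η, τ η x ∂lam ε) - τ 0 x = ∫ η, (τ η x - τ 0 x) ∂lam ε := by
          rw [integral_sub (hτintlam ε hε.1 x) (integrable_const _), integral_const,
            probReal_univ, one_smul]
        rw [heq]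
        have := norm_integral_le_of_norm_le_const (μ := lam ε)
          (f := fun η => τ η x - τ 0 x) (C := δ / 2) ?_
        · simpa [measure_univ] using this
        · filter_upwards [hae ε hε.1] with η hη
          rw [Real.norm_eq_abs]
          exact hub η ((abs_le.mpr hη).trans hε.2.le) x
      -- integrability of the averaged roof function
      have hDmeas : AEStronglyMeasurable (fun x => ∫ η, τ η x ∂lam ε) (ν ε) := by
        have h3 : StronglyMeasurable (fun p : M × ℝ => τ p.2 p.1) :=
          (hτmeas.comp measurable_swap).stronglyMeasurable
        exact h3.integral_prod_right'.aestronglyMeasurable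
      have hDbdd : ∀ x, |∫ η, τ η x ∂lam ε| ≤ Cτ := by
        intro x
        have := norm_integral_le_of_norm_le_const (μ := lam ε)
          (f := fun η => τ η x) (C := Cτ)
          (ae_of_all _ fun η => by
            rw [Real.norm_eq_abs, abs_of_pos (hτpos η x)]; exact hCτ η x)
        simpa [measure_univ] using this
      have hDint : Integrable (fun x => ∫ η, τ η x ∂lam ε) (ν ε) :=
        integrable_of_abs_le hDmeas hDbdd
      have heq2 : (∫ x, (∫ η, τ η x ∂lam ε) ∂ν ε) - ∫ x, τ 0 x ∂ν ε
          = ∫ x, ((∫ η, τ η x ∂lam ε) - τ 0 x) ∂ν ε := by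
        rw [integral_sub hDint (hτ0int (ν ε) inferInstance)]
      rw [Real.dist_eq, sub_zero, heq2]
      have := norm_integral_le_of_norm_le_const (μ := ν ε)
        (f := fun x => (∫ η, τ η x ∂lam ε) - τ 0 x) (C := δ / 2)
        (ae_of_all _ fun x => by rw [Real.norm_eq_abs]; exact hptw x)
      rw [Real.norm_eq_abs] at this
      calc |∫ x, ((∫ η, τ η x ∂lam ε) - τ 0 x) ∂ν ε|
          ≤ δ / 2 * ((ν ε) univ).toReal := this
        _ = δ / 2 := by simp [measure_univ]
        _ < δ := by linarith
    have h4 := h2.add h1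
    rw [zero_add] at h4
    exact h4.congr fun ε => by ring
  ----------------------------------------------------------------
  -- Numerator: tends to ∫ G dν₀
  ----------------------------------------------------------------
  have hnum : Tendsto
      (fun ε => ∫ η, ∫ x, Φ (τ η x, x) ∂ν ε ∂lam ε)
      (nhdsWithin 0 (Ioi 0)) (nhds (∫ x, G x ∂ν₀)) := by
    have h1 : Tendsto (fun ε => ∫ x, G x ∂ν ε) (nhdsWithin (0:ℝ) (Ioi 0))
        (nhds (∫ x, G x ∂ν₀)) := hweak G hGcont
    have h2 : Tendsto
        (fun ε => (∫ η, ∫ x, Φ (τ η x, x) ∂ν ε ∂lam ε) - ∫ x, G x ∂ν ε)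
        (nhdsWithin (0:ℝ) (Ioi 0)) (nhds 0) := by
      rw [Metric.tendsto_nhds]
      intro δ hδ
      have hδ'pos : 0 < δ / (2 * (Cφ + 1)) := by positivity
      obtain ⟨εb, hεb, hub⟩ := hτunif (δ / (2 * (Cφ + 1))) hδ'pos
      have hCδ : Cφ * (δ / (2 * (Cφ + 1))) ≤ δ / 2 := by
        have hc1 : (0:ℝ) < Cφ + 1 := by linarith
        have key : Cφ * (δ / (2 * (Cφ + 1))) = δ / 2 * (Cφ / (Cφ + 1)) := by
          field_simp
        rw [key]
        have hle : Cφ / (Cφ + 1) ≤ 1 := (div_le_one hc1).mpr (by linarith)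
        calc δ / 2 * (Cφ / (Cφ + 1)) ≤ δ / 2 * 1 :=
              mul_le_mul_of_nonneg_left hle (by linarith)
          _ = δ / 2 := mul_one _
      filter_upwards [Ioo_mem_nhdsGT_of_mem (⟨le_refl (0:ℝ), hεb⟩ : (0:ℝ) ∈ Ico 0 εb)]
        with ε hε
      haveI := hlamprob ε hε.1
      haveI := hνprob ε hε.1
      -- integrability in x for fixed η
      have hxint : ∀ η : ℝ, Integrable (fun x => Φ (τ η x, x)) (ν ε) := fun η =>
        integrable_of_abs_le (hhcont η).aestronglyMeasurable (hhbdd η)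
      have hGint : Integrable G (ν ε) :=
        integrable_of_abs_le hGcont.aestronglyMeasurable hGbdd
      -- bound on the inner ν-integral for good η
      have hinner : ∀ η : ℝ, |η| ≤ εb →
          |(∫ x, Φ (τ η x, x) ∂ν ε) - ∫ x, G x ∂ν ε|
            ≤ Cφ * (δ / (2 * (Cφ + 1))) := by
        intro η hη
        rw [← integral_sub (hxint η) hGint]
        have := norm_integral_le_of_norm_le_const (μ := ν ε)
          (f := fun x => Φ (τ η x, x) - G x)
          (C := Cφ * (δ / (2 * (Cφ + 1))))
          (ae_of_all _ fun x => by
            rw [Real.norm_eq_abs]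
            exact (hkey η x).trans
              (mul_le_mul_of_nonneg_left (hub η hη x) hCφ0))
        simpa [measure_univ] using this
      -- measurability of η ↦ ∫ x ...
      have hηmeas : AEStronglyMeasurable
          (fun η => ∫ x, Φ (τ η x, x) ∂ν ε) (lam ε) :=
        hhmeas.stronglyMeasurable.integral_prod_right'.aestronglyMeasurable
      have hηbdd : ∀ η, |∫ x, Φ (τ η x, x) ∂ν ε| ≤ Cφ * Cτ := by
        intro η
        have := norm_integral_le_of_norm_le_const (μ := ν ε)
          (f := fun x => Φ (τ η x, x)) (C := Cφ * Cτ)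
          (ae_of_all _ fun x => by rw [Real.norm_eq_abs]; exact hhbdd η x)
        simpa [measure_univ] using this
      have hηint : Integrable (fun η => ∫ x, Φ (τ η x, x) ∂ν ε) (lam ε) :=
        integrable_of_abs_le hηmeas hηbdd
      have heq : (∫ η, ∫ x, Φ (τ η x, x) ∂ν ε ∂lam ε) - ∫ x, G x ∂ν ε
          = ∫ η, ((∫ x, Φ (τ η x, x) ∂ν ε) - ∫ x, G x ∂ν ε) ∂lam ε := by
        rw [integral_sub hηint (integrable_const _), integral_const, probReal_univ,
          one_smul]
      rw [Real.dist_eq, sub_zero, heq]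
      have := norm_integral_le_of_norm_le_const (μ := lam ε)
        (f := fun η => (∫ x, Φ (τ η x, x) ∂ν ε) - ∫ x, G x ∂ν ε)
        (C := Cφ * (δ / (2 * (Cφ + 1)))) ?_
      · rw [Real.norm_eq_abs] at this
        calc |∫ η, ((∫ x, Φ (τ η x, x) ∂ν ε) - ∫ x, G x ∂ν ε) ∂lam ε|
            ≤ Cφ * (δ / (2 * (Cφ + 1))) * ((lam ε) univ).toReal := this
          _ = Cφ * (δ / (2 * (Cφ + 1))) := by simp [measure_univ]
          _ ≤ δ / 2 := hCδ
          _ < δ := by linarith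
      · filter_upwards [hae ε hε.1] with η hη
        rw [Real.norm_eq_abs]
        exact hinner η ((abs_le.mpr hη).trans hε.2.le)
    have h4 := h2.add h1
    rw [zero_add] at h4
    exact h4.congr fun ε => by ring
  exact hnum.div hden (ne_of_gt hBpos)
end
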